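/- arXiv:2006.10332 — 2 statements merged into one kernel-verified Lean document; each statement's English description precedes it below -/
import Mathlib

section
/- Consider the energy sharing game with I ≥ 2 prosumers, and suppose that for every i the self-sufficiency problem — minimize f_i(p_i) − u_i(d_i) subject to p_i = d_i, p̲_i ≤ p_i ≤ p̄_i, d̲_i ≤ d_i ≤ d̄_i — is feasible, with (unique) optimal solution (p̌_i, ď_i). Let (p̂, d̂, b̂) be a generalized Nash equilibrium. Then for every i, f_i(p̌_i) − u_i(ď_i) ≥ Γ_i(p̂, d̂, b̂); moreover, the inequality is strict for at least one i unless (p̌, ď) = (p̂, d̂). -/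
open Finset

/-- Energy sharing price given bids. -/
noncomputable def price (I : ℕ) (a : ℝ) (b : Fin I → ℝ) : ℝ :=
  (∑ j, b j) / (a * I)

/-- Cost of prosumer `i` in the energy sharing game. -/
noncomputable def gamma (I : ℕ) (a : ℝ) (f u : Fin I → ℝ → ℝ) (i : Fin I)
    (p d b : Fin I → ℝ) : ℝ :=
  f i (p i) - u i (d i) + price I a b * (-(a * price I a b) + b i)

/-- Feasibility of prosumer `i`'s part of a profile. -/
def feasOf (I : ℕ) (a : ℝ) (plo phi dlo dhi : Fin I → ℝ) (i : Fin I)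
    (p d b : Fin I → ℝ) : Prop :=
  p i - a * price I a b + b i = d i ∧
    plo i ≤ p i ∧ p i ≤ phi i ∧ dlo i ≤ d i ∧ d i ≤ dhi i

/-- Generalized Nash equilibrium of the energy sharing game. -/
def IsGNE (I : ℕ) (a : ℝ) (f u : Fin I → ℝ → ℝ) (plo phi dlo dhi : Fin I → ℝ)
    (p d b : Fin I → ℝ) : Prop :=
  ∀ i : Fin I,
    feasOf I a plo phi dlo dhi i p d b ∧
    ∀ pi di bi : ℝ,
      feasOf I a plo phi dlo dhi i (Function.update p i pi)
        (Function.update d i di) (Function.update b i bi) →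
      gamma I a f u i p d b ≤
        gamma I a f u i (Function.update p i pi)
          (Function.update d i di) (Function.update b i bi)

/-
Fix a prosumer `i` and the others' bids `b_{-i}`, and put `s = ∑_{j ≠ i} b_j`. As a function of
its own decision `(p_i, d_i, b_i)`, prosumer `i`'s cost is `f_i(p_i) - u_i(d_i)` plus the payment
`(s + b_i)((I - 1) b_i - s) / (a I²)`, a quadratic in `b_i` with positive leading coefficient; so
the cost is strictly convex, and it is minimised at the equilibrium over a convex feasible set.
The bid `b_i = s / (I - 1)` makes `a λ = b_i`: the balance constraint becomes `p_i = d_i` and the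
payment vanishes. Hence the self-sufficient solution is a feasible deviation of cost
`f_i(p̌_i) - u_i(ď_i)`, which gives the inequality, and in case of equality it is a second
minimiser of a strictly convex function, hence equal to the equilibrium strategy.
-/

open Set Function

theorem StrictConvexOn.add_prod {𝕜 E F β : Type*} [Semiring 𝕜] [PartialOrder 𝕜]
    [AddCommMonoid E] [AddCommMonoid F] [AddCommMonoid β] [PartialOrder β]
    [IsOrderedCancelAddMonoid β] [Module 𝕜 E] [Module 𝕜 F] [Module 𝕜 β]
    {s : Set E} {t : Set F} {f : E → β} {g : F → β}
    (hf : StrictConvexOn 𝕜 s f) (hg : StrictConvexOn 𝕜 t g) :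
    StrictConvexOn 𝕜 (s ×ˢ t) (fun z => f z.1 + g z.2) := by
  refine ⟨hf.1.prod hg.1, fun x hx y hy hxy a b ha hb hab => ?_⟩
  simp only [Prod.fst_add, Prod.snd_add, Prod.smul_fst, Prod.smul_snd, smul_add]
  rw [add_add_add_comm]
  obtain h1 | h1 := eq_or_ne x.1 y.1
  · have h2 : x.2 ≠ y.2 := fun h2 => hxy (Prod.ext h1 h2)
    exact add_lt_add_of_le_of_lt (hf.convexOn.2 hx.1 hy.1 ha.le hb.le hab)
      (hg.2 hx.2 hy.2 h2 ha hb hab)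
  · exact add_lt_add_of_lt_of_le (hf.2 hx.1 hy.1 h1 ha hb hab)
      (hg.convexOn.2 hx.2 hy.2 ha.le hb.le hab)

theorem strictConvexOn_affine_mul_affine {α β γ δ : ℝ} (h : 0 < α * γ) :
    StrictConvexOn ℝ univ (fun x => (α * x + β) * (γ * x + δ)) := by
  refine ⟨convex_univ, fun x _ y _ hxy s t hs ht hst => ?_⟩
  have hgap : s * ((α * x + β) * (γ * x + δ)) + t * ((α * y + β) * (γ * y + δ))
      - (α * (s * x + t * y) + β) * (γ * (s * x + t * y) + δ)
      = α * γ * s * t * (x - y) ^ 2 := by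
    obtain rfl : t = 1 - s := by linarith
    ring
  have : 0 < α * γ * s * t * (x - y) ^ 2 := by
    have := sub_ne_zero.2 hxy
    positivity
  simp only [smul_eq_mul]
  linarith

section Deviation

variable (I : ℕ) (a : ℝ) (f u : Fin I → ℝ → ℝ) (plo phi dlo dhi : Fin I → ℝ)
  (p d b : Fin I → ℝ) (i : Fin I)

noncomputable def deviationCost (z : ℝ × ℝ × ℝ) : ℝ :=
  gamma I a f u i (update p i z.1) (update d i z.2.1) (update b i z.2.2)

def feasibleDeviations : Set (ℝ × ℝ × ℝ) :=
  {z | z.1 - a * price I a (update b i z.2.2) + z.2.2 = z.2.1 ∧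
    z.1 ∈ Icc (plo i) (phi i) ∧ z.2.1 ∈ Icc (dlo i) (dhi i)}

theorem feasOf_update_iff {q e x : ℝ} :
    feasOf I a plo phi dlo dhi i (update p i q) (update d i e) (update b i x) ↔
      (q, e, x) ∈ feasibleDeviations I a plo phi dlo dhi b i := by
  simp [feasOf, feasibleDeviations, and_assoc]

variable {I a f u plo phi dlo dhi p d b}

theorem price_update (x : ℝ) :
    price I a (update b i x) = price I a b + (x - b i) / (a * I) := by
  rw [price, price, sum_update_of_mem (mem_univ i), ← add_sum_erase _ _ (mem_univ i),
    sdiff_singleton_eq_erase]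
  ring

theorem convex_feasibleDeviations : Convex ℝ (feasibleDeviations I a plo phi dlo dhi b i) := by
  rintro ⟨q, e, x⟩ ⟨hbal, hq, he⟩ ⟨q', e', x'⟩ ⟨hbal', hq', he'⟩ s t hs ht hst
  refine ⟨?_, (convex_Icc _ _) hq hq' hs ht hst, (convex_Icc _ _) he he' hs ht hst⟩
  simp only [price_update, Prod.smul_mk, Prod.mk_add_mk, smul_eq_mul] at hbal hbal' ⊢
  linear_combination s * hbal + t * hbal' + (a * price I a b - a * b i / (a * I)) * hst

theorem strictConvexOn_deviationCost (ha : 0 < a) (hI : 2 ≤ I)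
    (hf : StrictConvexOn ℝ univ (f i)) (hu : StrictConcaveOn ℝ univ (u i)) :
    StrictConvexOn ℝ univ (deviationCost I a f u p d b i) := by
  have hI' : (2 : ℝ) ≤ I := by exact_mod_cast hI
  set s := ∑ j, b j - b i
  have hpayment : StrictConvexOn ℝ univ
      (fun x => price I a (update b i x) * (-(a * price I a (update b i x)) + x)) := by
    have hcoeff : 0 < (a * I)⁻¹ * (1 - (I : ℝ)⁻¹) :=
      mul_pos (by positivity) (sub_pos.2 (inv_lt_one_of_one_lt₀ (by linarith)))
    convert strictConvexOn_affine_mul_affine (β := s * (a * I)⁻¹) (δ := -(s * (I : ℝ)⁻¹))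
      hcoeff using 2 with x
    rw [price_update, price]
    field_simp
    ring
  have hsum := hf.add_prod (hu.neg.add_prod hpayment)
  rw [univ_prod_univ, univ_prod_univ] at hsum
  refine hsum.congr fun z _ => ?_
  simp only [deviationCost, gamma, update_self, Pi.neg_apply]
  ring

theorem exists_selfSufficient_deviation (ha : a ≠ 0) (hI : 2 ≤ I) {x : ℝ}
    (hpx : x ∈ Icc (plo i) (phi i)) (hdx : x ∈ Icc (dlo i) (dhi i)) :
    ∃ y, (x, x, y) ∈ feasibleDeviations I a plo phi dlo dhi b i ∧
      deviationCost I a f u p d b i (x, x, y) = f i x - u i x := by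
  have hI' : (2 : ℝ) ≤ I := by exact_mod_cast hI
  set y := (∑ j, b j - b i) / (I - 1)
  have hy : a * price I a (update b i y) = y := by
    have hyI : y * (I - 1) = ∑ j, b j - b i := div_mul_cancel₀ _ (by linarith)
    rw [price_update, price]
    field_simp
    linarith
  refine ⟨y, ⟨by simp only [hy]; ring, hpx, hdx⟩, ?_⟩
  simp only [deviationCost, gamma, update_self, hy]
  ring

theorem deviationCost_self :
    deviationCost I a f u p d b i (p i, d i, b i) = gamma I a f u i p d b := by
  simp only [deviationCost, update_eq_self]

theorem IsGNE.mem_feasibleDeviations (h : IsGNE I a f u plo phi dlo dhi p d b) :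
    (p i, d i, b i) ∈ feasibleDeviations I a plo phi dlo dhi b i := by
  rw [← feasOf_update_iff I a plo phi dlo dhi p d b]
  simpa only [update_eq_self] using (h i).1

theorem IsGNE.isMinOn_deviationCost (h : IsGNE I a f u plo phi dlo dhi p d b) :
    IsMinOn (deviationCost I a f u p d b i) (feasibleDeviations I a plo phi dlo dhi b i)
      (p i, d i, b i) := by
  refine isMinOn_iff.2 fun z hz => ?_
  rw [deviationCost_self]
  exact (h i).2 z.1 z.2.1 z.2.2 ((feasOf_update_iff ..).2 hz)

theorem IsGNE.gamma_le_selfSufficient (h : IsGNE I a f u plo phi dlo dhi p d b)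
    (ha : a ≠ 0) (hI : 2 ≤ I) {x : ℝ} (hpx : x ∈ Icc (plo i) (phi i))
    (hdx : x ∈ Icc (dlo i) (dhi i)) :
    gamma I a f u i p d b ≤ f i x - u i x := by
  obtain ⟨y, hy, hcost⟩ := exists_selfSufficient_deviation (f := f) (u := u) (p := p) (d := d)
    i ha hI hpx hdx
  rw [← deviationCost_self, ← hcost]
  exact isMinOn_iff.1 (h.isMinOn_deviationCost i) _ hy

theorem IsGNE.eq_of_gamma_eq_selfSufficient (h : IsGNE I a f u plo phi dlo dhi p d b)
    (ha : 0 < a) (hI : 2 ≤ I) (hf : StrictConvexOn ℝ univ (f i))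
    (hu : StrictConcaveOn ℝ univ (u i)) {x : ℝ} (hpx : x ∈ Icc (plo i) (phi i))
    (hdx : x ∈ Icc (dlo i) (dhi i)) (heq : gamma I a f u i p d b = f i x - u i x) :
    p i = x ∧ d i = x := by
  obtain ⟨y, hy, hcost⟩ := exists_selfSufficient_deviation (f := f) (u := u) (p := p) (d := d)
    i ha.ne' hI hpx hdx
  have hmin := h.isMinOn_deviationCost i
  have hmin' : IsMinOn (deviationCost I a f u p d b i)
      (feasibleDeviations I a plo phi dlo dhi b i) (x, x, y) := by
    refine isMinOn_iff.2 fun z hz => ?_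
    rw [hcost, ← heq, ← deviationCost_self]
    exact isMinOn_iff.1 hmin _ hz
  have hsame : (p i, d i, b i) = (x, x, y) :=
    ((strictConvexOn_deviationCost i ha hI hf hu).subset (subset_univ _)
      (convex_feasibleDeviations i)).eq_of_isMinOn hmin hmin' (h.mem_feasibleDeviations i) hy
  simp only [Prod.mk.injEq] at hsame
  exact ⟨hsame.1, hsame.2.1⟩

end Deviation

theorem gne_pareto_improvement_general
    (I : ℕ) (hI : 2 ≤ I) (a : ℝ) (ha : 0 < a)
    (f u : Fin I → ℝ → ℝ) (plo phi dlo dhi : Fin I → ℝ)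
    (hfc : ∀ i, StrictConvexOn ℝ Set.univ (f i))
    (huc : ∀ i, StrictConcaveOn ℝ Set.univ (u i))
    -- self-sufficiency optimal solution (p̌, ď)
    (pc dc : Fin I → ℝ)
    (hself_eq : ∀ i, pc i = dc i)
    (hself_feas : ∀ i, plo i ≤ pc i ∧ pc i ≤ phi i ∧ dlo i ≤ dc i ∧ dc i ≤ dhi i)
    -- the GNE (p̂, d̂, b̂)
    (phat dhat bhat : Fin I → ℝ)
    (hGNE : IsGNE I a f u plo phi dlo dhi phat dhat bhat) :
    (∀ i, gamma I a f u i phat dhat bhat ≤ f i (pc i) - u i (dc i)) ∧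
      ((pc, dc) ≠ (phat, dhat) →
        ∃ i, gamma I a f u i phat dhat bhat < f i (pc i) - u i (dc i)) := by
  obtain rfl : pc = dc := funext hself_eq
  have hbox i : pc i ∈ Icc (plo i) (phi i) ∧ pc i ∈ Icc (dlo i) (dhi i) :=
    let ⟨h₁, h₂, h₃, h₄⟩ := hself_feas i
    ⟨⟨h₁, h₂⟩, h₃, h₄⟩
  have hle i : gamma I a f u i phat dhat bhat ≤ f i (pc i) - u i (pc i) :=
    hGNE.gamma_le_selfSufficient i ha.ne' hI (hbox i).1 (hbox i).2
  refine ⟨hle, fun hne => ?_⟩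
  by_contra! hge
  have heq i : phat i = pc i ∧ dhat i = pc i :=
    hGNE.eq_of_gamma_eq_selfSufficient i ha hI (hfc i) (huc i) (hbox i).1 (hbox i).2
      ((hle i).antisymm (hge i))
  exact hne (Prod.ext (funext fun i => (heq i).1.symm) (funext fun i => (heq i).2.symm))

/-- Pareto improvement: at a GNE no prosumer is worse off than under self-sufficiency,
and at least one is strictly better off unless the two solutions coincide. -/
theorem gne_pareto_improvement
    (I : ℕ) (hI : 2 ≤ I) (a : ℝ) (ha : 0 < a)
    (f u : Fin I → ℝ → ℝ) (plo phi dlo dhi : Fin I → ℝ)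
    (hf : ∀ i, ContDiff ℝ 2 (f i)) (hfc : ∀ i, StrictConvexOn ℝ Set.univ (f i))
    (hu : ∀ i, ContDiff ℝ 2 (u i)) (huc : ∀ i, StrictConcaveOn ℝ Set.univ (u i))
    (hpb : ∀ i, plo i ≤ phi i) (hdb : ∀ i, dlo i ≤ dhi i)
    -- self-sufficiency optimal solution (p̌, ď)
    (pc dc : Fin I → ℝ)
    (hself_eq : ∀ i, pc i = dc i)
    (hself_feas : ∀ i, plo i ≤ pc i ∧ pc i ≤ phi i ∧ dlo i ≤ dc i ∧ dc i ≤ dhi i)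
    (hself_opt : ∀ i, ∀ x : ℝ,
      plo i ≤ x → x ≤ phi i → dlo i ≤ x → x ≤ dhi i →
      f i (pc i) - u i (dc i) ≤ f i x - u i x)
    (hself_unique : ∀ i, ∀ x : ℝ,
      plo i ≤ x → x ≤ phi i → dlo i ≤ x → x ≤ dhi i →
      f i x - u i x = f i (pc i) - u i (dc i) → x = pc i)
    -- the GNE (p̂, d̂, b̂)
    (phat dhat bhat : Fin I → ℝ)
    (hGNE : IsGNE I a f u plo phi dlo dhi phat dhat bhat) :
    (∀ i, gamma I a f u i phat dhat bhat ≤ f i (pc i) - u i (dc i)) ∧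
      ((pc, dc) ≠ (phat, dhat) →
        ∃ i, gamma I a f u i phat dhat bhat < f i (pc i) - u i (dc i)) :=
  gne_pareto_improvement_general I hI a ha f u plo phi dlo dhi hfc huc pc dc hself_eq hself_feas
    phat dhat bhat hGNE
end

section
/- Let I ≥ 2 be an integer, a > 0, m > 0 with a·m ≥ (2I−4)/(I−1), and for each i ∈ {1,…,I} let f_i, u_i : ℝ → ℝ be twice differentiable with f_i'' ≥ m and −u_i'' ≥ m everywhere, with capacity bounds p̲_i ≤ p̄_i, d̲_i ≤ d̄_i. Let Y = Π_{i=1}^I [p̲_i, p̄_i] × [d̲_i, d̄_i], define φ(p, d) = Σ_i f_i(p_i) − Σ_i u_i(d_i) + Σ_i (d_i − p_i)²/(2a(I−1)) − (Σ_i d_i − Σ_i p_i)²/(2aI) and L((p,d), λ) = φ(p,d) − λ·Σ_{i=1}^I (p_i − d_i). If there exists (p⁰, d⁰) ∈ Y with Σ_i p⁰_i = Σ_i d⁰_i, then L has a saddle point on Y × ℝ: there exist (p*, d*) ∈ Y and λ* ∈ ℝ such that L((p*,d*), λ) ≤ L((p*,d*), λ*) ≤ L((p,d), λ*) for all (p,d)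 ∈ Y and all λ ∈ ℝ. -/
/-!
Under A4 the potential `φ` is convex: after removing `m/2 x²` from each `f_i` and `-u_i`, what is
left of `φ` is a sum of nonnegative multiples of squares of linear forms. Let `x` minimize `φ` on
the compact slice `c = 0` of the box `Y`, where `c = Σ p - Σ d`. If `c p < 0 < c q` for `p, q ∈ Y`,
the segment `[p, q]` meets the slice, so by convexity the slope `(φ p - φ x) / c p` is at most
`(φ q - φ x) / c q`; any `λ` between the two families of slopes is a multiplier. The slopes are also
bounded, because `φ` is Lipschitz on `Y` and every point `p` of the box lies within `|c p|` of the
slice; this matters when `c` has only one sign on `Y`.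
-/

open Finset

/-- Potential function of the energy sharing game. -/
noncomputable def potential (I : ℕ) (a : ℝ) (f u : Fin I → ℝ → ℝ)
    (pd : (Fin I → ℝ) × (Fin I → ℝ)) : ℝ :=
  ∑ i, f i (pd.1 i) - ∑ i, u i (pd.2 i) +
    (∑ i, (pd.2 i - pd.1 i) ^ 2) / (2 * a * ((I : ℝ) - 1)) -
    (∑ i, pd.2 i - ∑ i, pd.1 i) ^ 2 / (2 * a * (I : ℝ))

/-- Lagrangian of the energy sharing game. -/
noncomputable def lagrangian (I : ℕ) (a : ℝ) (f u : Fin I → ℝ → ℝ)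
    (pd : (Fin I → ℝ) × (Fin I → ℝ)) (lam : ℝ) : ℝ :=
  potential I a f u pd - lam * ∑ i, (pd.1 i - pd.2 i)

section Convexity

theorem convexOn_finset_sum {ι E : Type*} [AddCommGroup E] [Module ℝ E] {s : Set E}
    (hs : Convex ℝ s) (t : Finset ι) {g : ι → E → ℝ} (hg : ∀ i ∈ t, ConvexOn ℝ s (g i)) :
    ConvexOn ℝ s (fun x => ∑ i ∈ t, g i x) := by
  classical
  induction t using Finset.induction with
  | empty => simpa using convexOn_const 0 hs
  | insert j t hj ih =>
    simp only [sum_insert hj]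
    exact (hg j (mem_insert_self j t)).add (ih fun i hi => hg i (mem_insert_of_mem hi))

theorem convexOn_univ_sq_linearMap {E : Type*} [AddCommGroup E] [Module ℝ E] (ℓ : E →ₗ[ℝ] ℝ) :
    ConvexOn ℝ Set.univ (fun x => ℓ x ^ 2) :=
  (Even.convexOn_pow even_two : ConvexOn ℝ Set.univ fun x : ℝ => x ^ 2).comp_linearMap ℓ

theorem convexOn_univ_sub_half_mul_sq {g : ℝ → ℝ} {m : ℝ} (hg : ContDiff ℝ 2 g)
    (hg'' : ∀ x, m ≤ iteratedDeriv 2 g x) :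
    ConvexOn ℝ Set.univ (fun x => g x - m / 2 * x ^ 2) := by
  have hq : ContDiff ℝ 2 (fun x : ℝ => m / 2 * x ^ 2) := by fun_prop
  have h : ContDiff ℝ 2 (g - fun x => m / 2 * x ^ 2) := hg.sub hq
  change ConvexOn ℝ Set.univ (g - fun x => m / 2 * x ^ 2)
  refine convexOn_univ_of_deriv2_nonneg (h.differentiable (by norm_num)) ?_ fun x => ?_
  · exact (h.iterate_deriv' 1 1).differentiable (by norm_num)
  · rw [← iteratedDeriv_eq_iterate, iteratedDeriv_sub hg.contDiffAt hq.contDiffAt,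
      iteratedDeriv_const_mul_field, iteratedDeriv_pow]
    norm_num
    linarith [hg'' x]

theorem sum_sub_mean_sq {ι : Type*} [Fintype ι] [Nonempty ι] (w : ι → ℝ) :
    ∑ i, (w i - (∑ j, w j) / Fintype.card ι) ^ 2
      = ∑ i, w i ^ 2 - (∑ i, w i) ^ 2 / Fintype.card ι := by
  have hn : (Fintype.card ι : ℝ) ≠ 0 := by positivity
  simp only [sub_sq, sum_add_distrib, sum_sub_distrib, sum_const, card_univ, nsmul_eq_mul,
    ← sum_mul, mul_comm (2 : ℝ)]
  field_simp
  ring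

theorem convexOn_univ_sum_sq_sub_sq_sum_div_card {ι : Type*} [Fintype ι] [Nonempty ι] :
    ConvexOn ℝ Set.univ (fun w : ι → ℝ => ∑ i, w i ^ 2 - (∑ i, w i) ^ 2 / Fintype.card ι) := by
  simp_rw [← sum_sub_mean_sq]
  refine convexOn_finset_sum convex_univ _ fun i _ => ?_
  convert convexOn_univ_sq_linearMap
    ((LinearMap.proj i - (Fintype.card ι : ℝ)⁻¹ • ∑ j, LinearMap.proj j :
      (ι → ℝ) →ₗ[ℝ] ℝ)) using 3
  simp [div_eq_inv_mul]

theorem potential_eq_sum_add {I : ℕ} (hI : 2 ≤ I) {a : ℝ} (ha : a ≠ 0) (m : ℝ)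
    (f u : Fin I → ℝ → ℝ) (pd : (Fin I → ℝ) × (Fin I → ℝ)) :
    potential I a f u pd =
      ∑ i, (f i (pd.1 i) - m / 2 * pd.1 i ^ 2 + (-u i (pd.2 i) - m / 2 * pd.2 i ^ 2) +
        m / 4 * (pd.1 i + pd.2 i) ^ 2 +
        (m / 4 - (I - 2) / (2 * a * (I - 1))) * (pd.2 i - pd.1 i) ^ 2) +
      (2 * a)⁻¹ * (∑ i, (pd.2 i - pd.1 i) ^ 2 - (∑ i, (pd.2 i - pd.1 i)) ^ 2 / I) := by
  have hI1 : (I : ℝ) - 1 ≠ 0 := by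
    have : (2 : ℝ) ≤ I := by exact_mod_cast hI
    linarith
  have hI0 : (I : ℝ) ≠ 0 := by positivity
  have hterm : ∀ i, f i (pd.1 i) - m / 2 * pd.1 i ^ 2 + (-u i (pd.2 i) - m / 2 * pd.2 i ^ 2) +
      m / 4 * (pd.1 i + pd.2 i) ^ 2 +
      (m / 4 - (I - 2) / (2 * a * (I - 1))) * (pd.2 i - pd.1 i) ^ 2 =
      f i (pd.1 i) - u i (pd.2 i) +
        ((2 * a * ((I : ℝ) - 1))⁻¹ - (2 * a)⁻¹) * (pd.2 i - pd.1 i) ^ 2 := fun i => by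
    field_simp
    ring
  simp only [hterm, potential, sum_add_distrib, sum_sub_distrib, ← mul_sum]
  field_simp
  ring

/-- The coefficient `m/4 - (I-2)/(2a(I-1))` in `potential_eq_sum_add` is nonnegative exactly
under A4. -/
theorem potential_convexOn {I : ℕ} (hI : 2 ≤ I) {a m : ℝ} (ha : 0 < a)
    (ham : (2 * (I : ℝ) - 4) / ((I : ℝ) - 1) ≤ a * m) {f u : Fin I → ℝ → ℝ}
    (hf : ∀ i, ContDiff ℝ 2 (f i)) (hu : ∀ i, ContDiff ℝ 2 (u i))
    (hf'' : ∀ i, ∀ x : ℝ, m ≤ iteratedDeriv 2 (f i) x)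
    (hu'' : ∀ i, ∀ x : ℝ, iteratedDeriv 2 (u i) x ≤ -m) :
    ConvexOn ℝ Set.univ (potential I a f u) := by
  have hI2 : (0 : ℝ) ≤ I - 2 := by
    have : (2 : ℝ) ≤ I := by exact_mod_cast hI
    linarith
  have hI1 : (0 : ℝ) < I - 1 := by linarith
  have hκ : 0 ≤ m / 4 - (I - 2) / (2 * a * (I - 1)) := by
    rw [div_le_iff₀ hI1] at ham
    rw [sub_nonneg, div_le_iff₀ (by positivity)]
    nlinarith
  have hm : 0 ≤ m / 4 := by linarith [div_nonneg hI2 (by positivity : (0 : ℝ) ≤ 2 * a * (I - 1))]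
  have : Nonempty (Fin I) := ⟨⟨0, by omega⟩⟩
  have hV := convexOn_univ_sum_sq_sub_sq_sum_div_card (ι := Fin I)
  rw [Fintype.card_fin] at hV
  let P' : ((Fin I → ℝ) × (Fin I → ℝ)) →ₗ[ℝ] Fin I → ℝ := LinearMap.fst ℝ _ _
  let D' : ((Fin I → ℝ) × (Fin I → ℝ)) →ₗ[ℝ] Fin I → ℝ := LinearMap.snd ℝ _ _
  let P : Fin I → ((Fin I → ℝ) × (Fin I → ℝ)) →ₗ[ℝ] ℝ := fun i => LinearMap.proj i ∘ₗ P'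
  let D : Fin I → ((Fin I → ℝ) × (Fin I → ℝ)) →ₗ[ℝ] ℝ := fun i => LinearMap.proj i ∘ₗ D'
  rw [show potential I a f u = _ from funext (potential_eq_sum_add hI ha.ne' m f u)]
  refine (convexOn_finset_sum convex_univ _ fun i _ => ?_).add
    ((hV.comp_linearMap (D' - P')).smul (by positivity))
  have hu' : ∀ x, m ≤ iteratedDeriv 2 (fun x => -u i x) x := fun x => by
    rw [iteratedDeriv_fun_neg]
    linarith [hu'' i x]
  exact ((((convexOn_univ_sub_half_mul_sq (hf i) (hf'' i)).comp_linearMap (P i)).add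
    ((convexOn_univ_sub_half_mul_sq (hu i).neg hu').comp_linearMap (D i))).add
    ((convexOn_univ_sq_linearMap (P i + D i)).smul hm)).add
    ((convexOn_univ_sq_linearMap (D i - P i)).smul hκ)

theorem contDiff_potential {n : WithTop ℕ∞} (I : ℕ) (a : ℝ) {f u : Fin I → ℝ → ℝ}
    (hf : ∀ i, ContDiff ℝ n (f i)) (hu : ∀ i, ContDiff ℝ n (u i)) :
    ContDiff ℝ n (potential I a f u) := by
  unfold potential
  fun_prop

end Convexity

section Multiplier

variable {E : Type*}

theorem ConvexOn.slope_le_slope_of_isMinOn [AddCommGroup E] [Module ℝ E] {Y : Set E}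
    {φ : E → ℝ} (hφ : ConvexOn ℝ Y φ) (c : E →ₗ[ℝ] ℝ) {x : E}
    (hmin : IsMinOn φ (Y ∩ {z | c z = 0}) x) {p q : E} (hp : p ∈ Y) (hq : q ∈ Y)
    (hcp : c p < 0) (hcq : 0 < c q) :
    (φ p - φ x) / c p ≤ (φ q - φ x) / c q := by
  have hden : 0 < c q - c p := by linarith
  set θ := c q / (c q - c p)
  set σ := -c p / (c q - c p)
  have hθ : 0 ≤ θ := div_nonneg hcq.le hden.le
  have hσ : 0 ≤ σ := div_nonneg (by linarith) hden.le
  have hθσ : θ + σ = 1 := by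
    simp only [θ, σ]
    field_simp
    ring
  have hcz : c (θ • p + σ • q) = 0 := by
    simp only [map_add, map_smul, smul_eq_mul, θ, σ]
    field_simp
    ring
  have hmix : φ x ≤ θ * φ p + σ * φ q :=
    (hmin ⟨hφ.1 hp hq hθ hσ hθσ, hcz⟩).trans (hφ.2 hp hq hθ hσ hθσ)
  have hcross : (c q - c p) * (θ * φ p + σ * φ q) = c q * φ p - c p * φ q := by
    simp only [θ, σ]
    field_simp
    ring
  have key := hcross ▸ mul_le_mul_of_nonneg_left hmix hden.le
  rw [div_le_iff_of_neg hcp, div_mul_eq_mul_div, div_le_iff₀ hcq]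
  linarith

theorem ConvexOn.exists_multiplier_of_isMinOn [AddCommGroup E] [Module ℝ E] {Y : Set E}
    {φ : E → ℝ} (hφ : ConvexOn ℝ Y φ) (c : E →ₗ[ℝ] ℝ) {x : E}
    (hmin : IsMinOn φ (Y ∩ {z | c z = 0}) x) {K : ℝ} (hK : 0 ≤ K)
    (hgrowth : ∀ p ∈ Y, φ x ≤ φ p + K * |c p|) :
    ∃ lam : ℝ, ∀ p ∈ Y, φ x ≤ φ p - lam * c p := by
  set S := insert (-K) ((fun p => (φ p - φ x) / c p) '' {p | p ∈ Y ∧ c p < 0})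
  have hS : BddAbove S := by
    refine ⟨K, ?_⟩
    rintro _ (rfl | ⟨p, ⟨hp, hcp⟩, rfl⟩)
    · linarith
    · have h := hgrowth p hp
      rw [abs_of_neg hcp] at h
      rw [div_le_iff_of_neg hcp]
      linarith
  refine ⟨sSup S, fun p hp => ?_⟩
  rcases lt_trichotomy (c p) 0 with hcp | hcp | hcp
  · have h := le_csSup hS (Set.mem_insert_of_mem _ ⟨p, ⟨hp, hcp⟩, rfl⟩)
    rw [div_le_iff_of_neg hcp] at h
    linarith
  · rw [hcp, mul_zero, sub_zero]
    exact hmin ⟨hp, hcp⟩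
  · have h : sSup S ≤ (φ p - φ x) / c p := by
      refine csSup_le (Set.insert_nonempty _ _) ?_
      rintro _ (rfl | ⟨q, ⟨hq, hcq⟩, rfl⟩)
      · have h := hgrowth p hp
        rw [abs_of_pos hcp] at h
        rw [le_div_iff₀ hcp]
        linarith
      · exact hφ.slope_le_slope_of_isMinOn c hmin hq hp hcq hcp
    rw [le_div_iff₀ hcp] at h
    linarith

theorem Convex.exists_mem_eq_zero_norm_sub_le [NormedAddCommGroup E] [NormedSpace ℝ E]
    {Y : Set E} (hY : Convex ℝ Y) (c : E →ₗ[ℝ] ℝ) {p w : E} (hp : p ∈ Y) (hw : w ∈ Y)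
    (hcw : c w ≤ 0) (hcp : 0 ≤ c p) (hpw : ‖p - w‖ ≤ c p - c w) :
    ∃ z ∈ Y, c z = 0 ∧ ‖p - z‖ ≤ c p := by
  set t := c p / (c p - c w)
  have ht0 : 0 ≤ t := div_nonneg hcp (by linarith)
  have ht1 : t ≤ 1 := div_le_one_of_le₀ (by linarith) (by linarith)
  -- when `c p = c w` both vanish and `t = 0` by the convention `x / 0 = 0`
  have htc : t * (c p - c w) = c p := div_mul_cancel_of_imp fun h => by linarith
  refine ⟨p + t • (w - p), hY.add_smul_sub_mem hp hw ⟨ht0, ht1⟩, ?_, ?_⟩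
  · simp only [map_add, map_smul, map_sub, smul_eq_mul]
    linarith
  · rw [sub_add_cancel_left, norm_neg, norm_smul, Real.norm_of_nonneg ht0, norm_sub_rev]
    calc t * ‖p - w‖ ≤ t * (c p - c w) := mul_le_mul_of_nonneg_left hpw ht0
      _ = c p := htc

theorem LipschitzOnWith.le_add_mul_norm_sub_of_isMinOn [SeminormedAddCommGroup E] {Y : Set E}
    {φ : E → ℝ} {K : NNReal} (hφ : LipschitzOnWith K φ Y) {c : E → ℝ} {x p z : E}
    (hmin : IsMinOn φ (Y ∩ {y | c y = 0}) x) (hp : p ∈ Y) (hz : z ∈ Y) (hcz : c z = 0) :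
    φ x ≤ φ p + K * ‖p - z‖ := by
  have hzp : φ z - φ p ≤ K * ‖p - z‖ := by
    simpa [dist_eq_norm, norm_sub_rev p] using (le_abs_self _).trans (hφ.dist_le_mul z hz p hp)
  have hxz : φ x ≤ φ z := hmin ⟨hz, hcz⟩
  linarith

end Multiplier

theorem setOf_forall_le_and_le_eq_Icc {ι : Type*} {plo phi dlo dhi : ι → ℝ} :
    {pd : (ι → ℝ) × (ι → ℝ) | ∀ i, plo i ≤ pd.1 i ∧ pd.1 i ≤ phi i ∧
      dlo i ≤ pd.2 i ∧ pd.2 i ≤ dhi i} = Set.Icc (plo, dlo) (phi, dhi) := by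
  ext p
  simp only [Set.mem_ofPred_eq, Set.mem_Icc, Prod.le_def, Pi.le_def]
  grind

def imbalance (ι : Type*) [Fintype ι] : (ι → ℝ) × (ι → ℝ) →ₗ[ℝ] ℝ where
  toFun pd := ∑ i, (pd.1 i - pd.2 i)
  map_add' p q := by
    simp only [Prod.fst_add, Prod.snd_add, Pi.add_apply, ← sum_add_distrib]
    congr! 1 with i
    ring
  map_smul' t p := by simp [mul_sum, mul_sub]

section Box

variable {ι : Type*} [Fintype ι]

theorem norm_sub_le_sum_sub {x y : ι → ℝ} (h : x ≤ y) : ‖y - x‖ ≤ ∑ i, (y i - x i) :=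
  (pi_norm_le_iff_of_nonneg (sum_nonneg fun i _ => sub_nonneg.2 (h i))).2 fun i => by
    rw [Pi.sub_apply, Real.norm_of_nonneg (sub_nonneg.2 (h i))]
    exact single_le_sum (fun j _ => sub_nonneg.2 (h j)) (mem_univ i)

theorem norm_sub_le_imbalance_sub {q r : (ι → ℝ) × (ι → ℝ)} (h1 : q.1 ≤ r.1) (h2 : r.2 ≤ q.2) :
    ‖r - q‖ ≤ imbalance ι r - imbalance ι q := by
  have e : imbalance ι r - imbalance ι q = ∑ i, (r.1 i - q.1 i) + ∑ i, (q.2 i - r.2 i) := by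
    simp only [imbalance, LinearMap.coe_mk, AddHom.coe_mk, ← sum_sub_distrib, ← sum_add_distrib]
    congr! 1 with i
    ring
  have h1' := norm_sub_le_sum_sub h1
  have h2' := norm_sub_le_sum_sub h2
  rw [e, Prod.norm_def, Prod.fst_sub, Prod.snd_sub, norm_sub_rev r.2]
  exact max_le (by linarith [norm_nonneg (q.2 - r.2)]) (by linarith [norm_nonneg (r.1 - q.1)])

/-- A Hoffman-type error bound for the balance constraint on a box. -/
theorem exists_mem_Icc_imbalance_eq_zero {lo hi x₀ p : (ι → ℝ) × (ι → ℝ)}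
    (hx₀ : x₀ ∈ Set.Icc lo hi) (hbal : imbalance ι x₀ = 0) (hp : p ∈ Set.Icc lo hi) :
    ∃ z ∈ Set.Icc lo hi, imbalance ι z = 0 ∧ ‖p - z‖ ≤ |imbalance ι p| := by
  set c := imbalance ι
  have hlohi : lo ≤ hi := hx₀.1.trans hx₀.2
  have hw : ((lo.1, hi.2) : (ι → ℝ) × (ι → ℝ)) ∈ Set.Icc lo hi :=
    ⟨⟨le_rfl, hlohi.2⟩, ⟨hlohi.1, le_rfl⟩⟩
  have hw' : ((hi.1, lo.2) : (ι → ℝ) × (ι → ℝ)) ∈ Set.Icc lo hi :=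
    ⟨⟨hlohi.1, le_rfl⟩, ⟨le_rfl, hlohi.2⟩⟩
  rcases le_total 0 (c p) with hcp | hcp
  · have hcw : c (lo.1, hi.2) ≤ 0 := by
      linarith [norm_sub_le_imbalance_sub (q := (lo.1, hi.2)) hx₀.1.1 hx₀.2.2,
        norm_nonneg (x₀ - (lo.1, hi.2))]
    obtain ⟨z, hz, hcz, hpz⟩ := (convex_Icc lo hi).exists_mem_eq_zero_norm_sub_le c hp hw hcw hcp
      (norm_sub_le_imbalance_sub hp.1.1 hp.2.2)
    exact ⟨z, hz, hcz, hpz.trans (le_abs_self _)⟩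
  · have hcw : c x₀ ≤ c (hi.1, lo.2) := by
      linarith [norm_sub_le_imbalance_sub (r := (hi.1, lo.2)) hx₀.2.1 hx₀.1.2,
        norm_nonneg ((hi.1, lo.2) - x₀)]
    have hpw : ‖p - (hi.1, lo.2)‖ ≤ (-c) p - (-c) (hi.1, lo.2) := by
      rw [norm_sub_rev, LinearMap.neg_apply, LinearMap.neg_apply, neg_sub_neg]
      exact norm_sub_le_imbalance_sub hp.2.1 hp.1.2
    obtain ⟨z, hz, hcz, hpz⟩ := (convex_Icc lo hi).exists_mem_eq_zero_norm_sub_le (-c) hp hw'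
      (by rw [LinearMap.neg_apply]; linarith) (by rw [LinearMap.neg_apply]; linarith) hpw
    rw [LinearMap.neg_apply, neg_eq_zero] at hcz
    rw [LinearMap.neg_apply, ← abs_of_nonpos hcp] at hpz
    exact ⟨z, hz, hcz, hpz⟩

end Box

theorem lagrangian_has_saddle_point_general
    (I : ℕ) (hI : 2 ≤ I) (a m : ℝ) (ha : 0 < a)
    (ham : (2 * (I : ℝ) - 4) / ((I : ℝ) - 1) ≤ a * m)
    (f u : Fin I → ℝ → ℝ)
    (hf : ∀ i, ContDiff ℝ 2 (f i)) (hu : ∀ i, ContDiff ℝ 2 (u i))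
    (hf'' : ∀ i, ∀ x : ℝ, m ≤ iteratedDeriv 2 (f i) x)
    (hu'' : ∀ i, ∀ x : ℝ, iteratedDeriv 2 (u i) x ≤ -m)
    (plo phi dlo dhi : Fin I → ℝ)
    (Y : Set ((Fin I → ℝ) × (Fin I → ℝ)))
    (hY : Y = {pd | ∀ i, plo i ≤ pd.1 i ∧ pd.1 i ≤ phi i ∧
      dlo i ≤ pd.2 i ∧ pd.2 i ≤ dhi i})
    -- A1: the centralized problem is feasible
    (hfeas : ∃ pd0 ∈ Y, ∑ i, pd0.1 i = ∑ i, pd0.2 i) :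
    ∃ pdstar ∈ Y, ∃ lamstar : ℝ,
      (∀ lam : ℝ, lagrangian I a f u pdstar lam ≤ lagrangian I a f u pdstar lamstar) ∧
      (∀ pd ∈ Y, lagrangian I a f u pdstar lamstar ≤ lagrangian I a f u pd lamstar) := by
  obtain rfl : Y = Set.Icc (plo, dlo) (phi, dhi) := hY.trans setOf_forall_le_and_le_eq_Icc
  set φ := potential I a f u
  set c := imbalance (Fin I)
  have hL : ∀ pd lam, lagrangian I a f u pd lam = φ pd - lam * c pd := fun _ _ => rfl
  obtain ⟨x₀, hx₀, hbal⟩ := hfeas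
  have hcx₀ : c x₀ = 0 := by simp [c, imbalance, sum_sub_distrib, hbal]
  have hφ : ContDiff ℝ 1 φ :=
    contDiff_potential I a (fun i => (hf i).of_le one_le_two) (fun i => (hu i).of_le one_le_two)
  obtain ⟨K, hK⟩ := hφ.locallyLipschitz.locallyLipschitzOn.exists_lipschitzOnWith_of_compact
    (isCompact_Icc (a := (plo, dlo)) (b := (phi, dhi)))
  obtain ⟨x, ⟨hxY, hcx : c x = 0⟩, hmin⟩ := (isCompact_Icc.inter_right
    (isClosed_eq (LinearMap.continuous_of_finiteDimensional c) continuous_const)).exists_isMinOn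
    ⟨x₀, hx₀, hcx₀⟩ hφ.continuous.continuousOn
  have hgrowth : ∀ p ∈ Set.Icc (plo, dlo) (phi, dhi), φ x ≤ φ p + K * |c p| := fun p hp => by
    obtain ⟨z, hz, hcz, hpz⟩ := exists_mem_Icc_imbalance_eq_zero hx₀ hcx₀ hp
    exact (hK.le_add_mul_norm_sub_of_isMinOn hmin hp hz hcz).trans
      (add_le_add_right (mul_le_mul_of_nonneg_left hpz K.2) _)
  obtain ⟨lam, hlam⟩ := ((potential_convexOn hI ha ham hf hu hf'' hu'').subset
    (Set.subset_univ _) (convex_Icc _ _)).exists_multiplier_of_isMinOn c hmin K.2 hgrowth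
  refine ⟨x, hxY, lam, fun _ => ?_, fun p hp => ?_⟩
  · rw [hL, hL, hcx, mul_zero, mul_zero]
  · rw [hL, hL, hcx, mul_zero, sub_zero]
    exact hlam p hp

/-- Under assumptions A1 and A4, the Lagrangian of the energy sharing game has a
saddle point on `Y × ℝ`, where `Y` is the product of the capacity boxes. -/
theorem lagrangian_has_saddle_point
    (I : ℕ) (hI : 2 ≤ I) (a m : ℝ) (ha : 0 < a) (hm : 0 < m)
    (ham : (2 * (I : ℝ) - 4) / ((I : ℝ) - 1) ≤ a * m)
    (f u : Fin I → ℝ → ℝ)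
    (hf : ∀ i, ContDiff ℝ 2 (f i)) (hu : ∀ i, ContDiff ℝ 2 (u i))
    (hf'' : ∀ i, ∀ x : ℝ, m ≤ iteratedDeriv 2 (f i) x)
    (hu'' : ∀ i, ∀ x : ℝ, iteratedDeriv 2 (u i) x ≤ -m)
    (plo phi dlo dhi : Fin I → ℝ)
    (Y : Set ((Fin I → ℝ) × (Fin I → ℝ)))
    (hY : Y = {pd | ∀ i, plo i ≤ pd.1 i ∧ pd.1 i ≤ phi i ∧
      dlo i ≤ pd.2 i ∧ pd.2 i ≤ dhi i})
    -- A1: the centralized problem is feasible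
    (hfeas : ∃ pd0 ∈ Y, ∑ i, pd0.1 i = ∑ i, pd0.2 i) :
    ∃ pdstar ∈ Y, ∃ lamstar : ℝ,
      (∀ lam : ℝ, lagrangian I a f u pdstar lam ≤ lagrangian I a f u pdstar lamstar) ∧
      (∀ pd ∈ Y, lagrangian I a f u pdstar lamstar ≤ lagrangian I a f u pd lamstar) :=
  lagrangian_has_saddle_point_general I hI a m ha ham f u hf hu hf'' hu'' plo phi dlo dhi Y hY hfeas
end
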